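/- (Robustness of the doubly robust functional under correct propensity models.) Fix a* ∈ {0,1} and suppose c := μ(A=a*, S=0) > 0 and that every w with μ(W=w) > 0 satisfies μ(W=w, A=1, S=1) > 0 and μ(W=w, A=0, S=1) > 0 (so the true propensities g₍1,1₎(w) and g₍0,1₎(w) are strictly positive). Let m*₁, m*₀ : 𝒲 → ℝ be arbitrary functions (possibly misspecified outcome-model limits). Then, with the TRUE propensities, E_μ[ 1{A=1,S=1}·g₍a*,0₎(W)/(c·g₍1,1₎(W))·(ΔY − m*₁(W)) − 1{A=0,S=1}·g₍a*,0₎(W)/(c·g₍0,1₎(W))·(ΔY − m*₀(W)) + (1{A=a*,S=0}/c)·(m*₁(W) − m*₀(W)) ] = ψ(a*). -/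

import Mathlib

/-!
Split the expectation over the finitely many strata `{W = w}`. On a stratum the weight
`g_{a*,0}(w) / (c g_{a,1}(w))` times the mass `μ(W = w, A = a, S = 1)` is
`μ(W = w, A = a*, S = 0) / c`, so the `a`-th weighted residual contributes
`μ(W = w, A = a*, S = 0) / c · (m_a(w) - m*_a(w))`. The outcome models `m*_a` then cancel against
the plug-in term, leaving `μ(W = w, A = a*, S = 0) / c · (m₁(w) - m₀(w))`, and summing over `w`
gives `ψ(a*)`. Strata of mass zero contribute nothing to either side.
-/

open MeasureTheory ProbabilityTheory
open scoped Classical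

noncomputable section

/-- Conditional expectation of `X` given the event `E`. -/
def cexp {Ω : Type*} [MeasurableSpace Ω] (μ : Measure Ω) (X : Ω → ℝ) (E : Set Ω) : ℝ :=
  ∫ ω, X ω ∂(μ[|E])

/-- The event `{W = w, A = a, S = s}`. -/
def evtWAS {Ω 𝒲 : Type*} (W : Ω → 𝒲) (A S : Ω → Bool) (w : 𝒲) (a s : Bool) : Set Ω :=
  {ω | W ω = w ∧ A ω = a ∧ S ω = s}

/-- The event `{A = a, S = s}`. -/
def evtAS {Ω : Type*} (A S : Ω → Bool) (a s : Bool) : Set Ω :=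
  {ω | A ω = a ∧ S ω = s}

/-- The outcome-difference regression `m_a(w) = E[Y₁ - Y₀ | W = w, A = a, S = 1]`. -/
def mfun {Ω 𝒲 : Type*} [MeasurableSpace Ω] (μ : Measure Ω) (W : Ω → 𝒲) (A S : Ω → Bool)
    (Y₀ Y₁ : Ω → ℝ) (a : Bool) (w : 𝒲) : ℝ :=
  cexp μ (fun ω => Y₁ ω - Y₀ ω) (evtWAS W A S w a true)

/-- The true propensity `g_{a,s}(w) = μ({A = a, S = s} | {W = w})`. -/
def gprop {Ω 𝒲 : Type*} [MeasurableSpace Ω] (μ : Measure Ω) (W : Ω → 𝒲) (A S : Ω → Bool)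
    (a s : Bool) (w : 𝒲) : ℝ :=
  ((μ[|{ω | W ω = w}]) {ω | A ω = a ∧ S ω = s}).toReal

/-- The target statistical parameter `ψ(a*) = E[m₁(W) − m₀(W) | A = a*, S = 0]`. -/
def psiParam {Ω 𝒲 : Type*} [MeasurableSpace Ω] (μ : Measure Ω) (W : Ω → 𝒲) (A S : Ω → Bool)
    (Y₀ Y₁ : Ω → ℝ) (astar : Bool) : ℝ :=
  cexp μ (fun ω => mfun μ W A S Y₀ Y₁ true (W ω) - mfun μ W A S Y₀ Y₁ false (W ω))
    (evtAS A S astar false)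

section

variable {Ω 𝒲 : Type*} [MeasurableSpace Ω] {μ : Measure Ω}

theorem cexp_eq_inv_mul_setIntegral (X : Ω → ℝ) (E : Set Ω) :
    cexp μ X E = (μ.real E)⁻¹ * ∫ ω in E, X ω ∂μ := by
  rw [cexp, ProbabilityTheory.cond, integral_smul_measure, ENNReal.toReal_inv, smul_eq_mul,
    measureReal_def]

theorem measureReal_mul_cexp [IsFiniteMeasure μ] (X : Ω → ℝ) (E : Set Ω) :
    μ.real E * cexp μ X E = ∫ ω in E, X ω ∂μ := by
  rw [cexp_eq_inv_mul_setIntegral]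
  by_cases hE : μ.real E = 0
  · rw [Measure.restrict_eq_zero.2 ((measureReal_eq_zero_iff).1 hE), integral_zero_measure,
      mul_zero, mul_zero]
  · rw [mul_inv_cancel_left₀ hE]

theorem setIntegral_const_mul_sub [IsFiniteMeasure μ] {X : Ω → ℝ} (hX : Integrable X μ)
    (E : Set Ω) (k m : ℝ) :
    ∫ ω in E, k * (X ω - m) ∂μ = k * μ.real E * (cexp μ X E - m) := by
  rw [integral_const_mul, integral_sub hX.integrableOn (integrable_const m),
    setIntegral_const, smul_eq_mul, ← measureReal_mul_cexp]
  ring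

theorem integral_comp_eq_sum_setIntegral [Fintype 𝒲] [MeasurableSpace 𝒲]
    [MeasurableSingletonClass 𝒲] {W : Ω → 𝒲} (hW : Measurable W) (F : 𝒲 → Ω → ℝ)
    (hF : ∀ w, Integrable (F w) μ) :
    ∫ ω, F (W ω) ω ∂μ = ∑ w, ∫ ω in {ω | W ω = w}, F w ω ∂μ := by
  have hfib (w : 𝒲) : MeasurableSet {ω | W ω = w} := hW (measurableSet_singleton w)
  have hsplit : ∀ ω, F (W ω) ω = ∑ w, {ω | W ω = w}.indicator (F w) ω := fun ω => by
    simp [Set.indicator_apply]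
  simp_rw [hsplit]
  rw [integral_finsetSum _ fun w _ => (hF w).indicator (hfib w)]
  simp_rw [integral_indicator (hfib _)]

theorem cexp_comp_eq_sum [Fintype 𝒲] [MeasurableSpace 𝒲] [MeasurableSingletonClass 𝒲]
    [IsFiniteMeasure μ] {W : Ω → 𝒲} (hW : Measurable W) (φ : 𝒲 → ℝ) (E : Set Ω) :
    cexp μ (fun ω => φ (W ω)) E = ∑ w, μ.real ({ω | W ω = w} ∩ E) / μ.real E * φ w := by
  rw [cexp_eq_inv_mul_setIntegral,
    integral_comp_eq_sum_setIntegral hW (fun w _ => φ w) fun w => integrable_const _,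
    Finset.mul_sum]
  refine Finset.sum_congr rfl fun w _ => ?_
  have hfib : MeasurableSet {ω | W ω = w} := hW (measurableSet_singleton w)
  rw [setIntegral_const, smul_eq_mul, measureReal_restrict_apply hfib]
  ring

end

section

variable {Ω 𝒲 : Type*} {W : Ω → 𝒲} {A S : Ω → Bool}

theorem evtWAS_eq_inter (w : 𝒲) (a s : Bool) :
    evtWAS W A S w a s = {ω | W ω = w} ∩ evtAS A S a s :=
  rfl

theorem ite_evtAS_eq_indicator (f : Ω → ℝ) (a s : Bool) :
    (fun ω => if A ω = a ∧ S ω = s then f ω else 0) = (evtAS A S a s).indicator f := by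
  funext ω
  simp [Set.indicator_apply, evtAS]

variable [MeasurableSpace Ω] {μ : Measure Ω}

theorem measurableSet_evtAS (hA : Measurable A) (hS : Measurable S) (a s : Bool) :
    MeasurableSet (evtAS A S a s) :=
  (hA (measurableSet_singleton a)).inter (hS (measurableSet_singleton s))

theorem integrable_ite_evtAS (hA : Measurable A) (hS : Measurable S) {f : Ω → ℝ}
    (hf : Integrable f μ) (a s : Bool) :
    Integrable (fun ω => if A ω = a ∧ S ω = s then f ω else 0) μ := by
  rw [ite_evtAS_eq_indicator]
  exact hf.indicator (measurableSet_evtAS hA hS a s)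

theorem setIntegral_ite_evtAS (hA : Measurable A) (hS : Measurable S) (f : Ω → ℝ) (w : 𝒲)
    (a s : Bool) :
    ∫ ω in {ω | W ω = w}, (if A ω = a ∧ S ω = s then f ω else 0) ∂μ
      = ∫ ω in evtWAS W A S w a s, f ω ∂μ := by
  rw [ite_evtAS_eq_indicator, setIntegral_indicator (measurableSet_evtAS hA hS a s),
    evtWAS_eq_inter]

theorem gprop_eq_div [MeasurableSpace 𝒲] [MeasurableSingletonClass 𝒲] (hW : Measurable W)
    (a s : Bool) (w : 𝒲) :
    gprop μ W A S a s w = μ.real (evtWAS W A S w a s) / μ.real {ω | W ω = w} := by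
  have hfib : MeasurableSet {ω | W ω = w} := hW (measurableSet_singleton w)
  rw [gprop, cond_apply hfib, ENNReal.toReal_mul,
    ENNReal.toReal_inv, div_eq_inv_mul]
  rfl

theorem gprop_div_mul_measureReal [MeasurableSpace 𝒲] [MeasurableSingletonClass 𝒲]
    [IsFiniteMeasure μ] (hW : Measurable W) {w : 𝒲} {a s : Bool}
    (hoverlap : μ {ω | W ω = w} ≠ 0 → μ (evtWAS W A S w a s) ≠ 0) (a' s' : Bool) (c : ℝ) :
    gprop μ W A S a' s' w / (c * gprop μ W A S a s w) * μ.real (evtWAS W A S w a s)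
      = μ.real (evtWAS W A S w a' s') / c := by
  by_cases hw : μ {ω | W ω = w} = 0
  · have hnull (a s : Bool) : μ.real (evtWAS W A S w a s) = 0 :=
      (measureReal_eq_zero_iff).2 (measure_mono_null (fun _ h => h.1) hw)
    simp [hnull]
  · have hB : μ.real (evtWAS W A S w a s) ≠ 0 :=
      (measureReal_ne_zero_iff).2 (hoverlap hw)
    have hfib : μ.real {ω | W ω = w} ≠ 0 := (measureReal_ne_zero_iff).2 hw
    rcases eq_or_ne c 0 with rfl | hc
    · simp
    · rw [gprop_eq_div hW, gprop_eq_div hW]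
      field_simp

/-- The integrand of the doubly robust functional with `W ω` frozen at `w`; `c` stands for
`μ(A = a*, S = 0)`. -/
def drScore (μ : Measure Ω) (W : Ω → 𝒲) (A S : Ω → Bool) (Y₀ Y₁ : Ω → ℝ) (astar : Bool)
    (c : ℝ) (m₁ m₀ : 𝒲 → ℝ) (w : 𝒲) (ω : Ω) : ℝ :=
  (if A ω = true ∧ S ω = true then
      gprop μ W A S astar false w / (c * gprop μ W A S true true w) * ((Y₁ ω - Y₀ ω) - m₁ w)
    else 0)
  - (if A ω = false ∧ S ω = true then
      gprop μ W A S astar false w / (c * gprop μ W A S false true w) * ((Y₁ ω - Y₀ ω) - m₀ w)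
    else 0)
  + (if A ω = astar ∧ S ω = false then (1 / c) * (m₁ w - m₀ w) else 0)

variable {Y₀ Y₁ : Ω → ℝ}

theorem integrable_drScore [IsFiniteMeasure μ] (hA : Measurable A) (hS : Measurable S)
    (hΔY : Integrable (fun ω => Y₁ ω - Y₀ ω) μ) (astar : Bool) (c : ℝ)
    (m₁ m₀ : 𝒲 → ℝ) (w : 𝒲) :
    Integrable (drScore μ W A S Y₀ Y₁ astar c m₁ m₀ w) μ :=
  ((integrable_ite_evtAS hA hS ((hΔY.sub (integrable_const _)).const_mul _) _ _).sub
    (integrable_ite_evtAS hA hS ((hΔY.sub (integrable_const _)).const_mul _) _ _)).add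
    (integrable_ite_evtAS hA hS (integrable_const _) _ _)

theorem setIntegral_drScore [MeasurableSpace 𝒲] [MeasurableSingletonClass 𝒲]
    [IsFiniteMeasure μ] (hA : Measurable A) (hS : Measurable S) (hW : Measurable W)
    (hΔY : Integrable (fun ω => Y₁ ω - Y₀ ω) μ) {w : 𝒲}
    (hoverlap : ∀ a, μ {ω | W ω = w} ≠ 0 → μ (evtWAS W A S w a true) ≠ 0) (astar : Bool)
    (c : ℝ) (m₁ m₀ : 𝒲 → ℝ) :
    ∫ ω in {ω | W ω = w}, drScore μ W A S Y₀ Y₁ astar c m₁ m₀ w ω ∂μ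
      = μ.real (evtWAS W A S w astar false) / c
          * (mfun μ W A S Y₀ Y₁ true w - mfun μ W A S Y₀ Y₁ false w) := by
  have hint {f : Ω → ℝ} (hf : Integrable f μ) (a s : Bool) :
      Integrable (fun ω => if A ω = a ∧ S ω = s then f ω else 0) (μ.restrict {ω | W ω = w}) :=
    (integrable_ite_evtAS hA hS hf a s).restrict
  have hIPW (k m : ℝ) (a s : Bool) : Integrable
      (fun ω => if A ω = a ∧ S ω = s then k * ((Y₁ ω - Y₀ ω) - m) else 0)
      (μ.restrict {ω | W ω = w}) :=
    hint ((hΔY.sub (integrable_const m)).const_mul k) a s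
  unfold drScore
  rw [integral_add ?_ (hint (integrable_const _) _ _),
    integral_sub (hIPW _ _ _ _) (hIPW _ _ _ _), setIntegral_ite_evtAS hA hS,
    setIntegral_ite_evtAS hA hS, setIntegral_ite_evtAS hA hS, setIntegral_const_mul_sub hΔY,
    setIntegral_const_mul_sub hΔY, setIntegral_const, smul_eq_mul,
    gprop_div_mul_measureReal hW (hoverlap true), gprop_div_mul_measureReal hW (hoverlap false),
    mfun, mfun]
  · ring
  · exact (hIPW _ _ _ _).sub (hIPW _ _ _ _)

end

theorem dr_functional_correct_propensity_models_general
    {Ω : Type*} [MeasurableSpace Ω] (μ : Measure Ω) [IsProbabilityMeasure μ]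
    {𝒲 : Type*} [Fintype 𝒲] [MeasurableSpace 𝒲] [MeasurableSingletonClass 𝒲]
    (S A : Ω → Bool) (W : Ω → 𝒲) (Y₀ Y₁ : Ω → ℝ)
    (hS : Measurable S) (hA : Measurable A) (hW : Measurable W)
    (hY₀ : Integrable Y₀ μ) (hY₁ : Integrable Y₁ μ)
    (astar : Bool)
    (hpos : ∀ w : 𝒲, 0 < μ {ω | W ω = w} →
      0 < μ (evtWAS W A S w true true) ∧ 0 < μ (evtWAS W A S w false true))
    (mstar1 mstar0 : 𝒲 → ℝ) :
    ∫ ω,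
      ((if A ω = true ∧ S ω = true then
          gprop μ W A S astar false (W ω)
            / ((μ (evtAS A S astar false)).toReal * gprop μ W A S true true (W ω))
            * ((Y₁ ω - Y₀ ω) - mstar1 (W ω))
        else 0)
      - (if A ω = false ∧ S ω = true then
          gprop μ W A S astar false (W ω)
            / ((μ (evtAS A S astar false)).toReal * gprop μ W A S false true (W ω))
            * ((Y₁ ω - Y₀ ω) - mstar0 (W ω))
        else 0)
      + (if A ω = astar ∧ S ω = false then
          (1 / (μ (evtAS A S astar false)).toReal) * (mstar1 (W ω) - mstar0 (W ω))
        else 0)) ∂μ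
    = psiParam μ W A S Y₀ Y₁ astar := by
  have hΔY : Integrable (fun ω => Y₁ ω - Y₀ ω) μ := hY₁.sub hY₀
  have hoverlap (w : 𝒲) (a : Bool) (hw : μ {ω | W ω = w} ≠ 0) :
      μ (evtWAS W A S w a true) ≠ 0 := by
    obtain ⟨h1, h0⟩ := hpos w (pos_iff_ne_zero.2 hw)
    cases a
    exacts [h0.ne', h1.ne']
  change ∫ ω, drScore μ W A S Y₀ Y₁ astar (μ (evtAS A S astar false)).toReal mstar1 mstar0
      (W ω) ω ∂μ = _
  rw [integral_comp_eq_sum_setIntegral hW _ (integrable_drScore hA hS hΔY _ _ _ _), psiParam,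
    cexp_comp_eq_sum hW fun w => mfun μ W A S Y₀ Y₁ true w - mfun μ W A S Y₀ Y₁ false w]
  exact Finset.sum_congr rfl fun w _ => setIntegral_drScore hA hS hW hΔY (hoverlap w) _ _ _ _

/-- the doubly robust functional recovers `ψ(a*)` when the propensity
models are correct, for arbitrary (possibly misspecified) outcome-model limits. -/
theorem dr_functional_correct_propensity_models
    {Ω : Type*} [MeasurableSpace Ω] (μ : Measure Ω) [IsProbabilityMeasure μ]
    {𝒲 : Type*} [Fintype 𝒲] [MeasurableSpace 𝒲] [MeasurableSingletonClass 𝒲]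
    (S A : Ω → Bool) (W : Ω → 𝒲) (Y₀ Y₁ : Ω → ℝ)
    (hS : Measurable S) (hA : Measurable A) (hW : Measurable W)
    (hY₀ : Integrable Y₀ μ) (hY₁ : Integrable Y₁ μ)
    (astar : Bool)
    (hc : 0 < μ (evtAS A S astar false))
    (hpos : ∀ w : 𝒲, 0 < μ {ω | W ω = w} →
      0 < μ (evtWAS W A S w true true) ∧ 0 < μ (evtWAS W A S w false true))
    (mstar1 mstar0 : 𝒲 → ℝ) :
    ∫ ω,
      ((if A ω = true ∧ S ω = true then
          gprop μ W A S astar false (W ω)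
            / ((μ (evtAS A S astar false)).toReal * gprop μ W A S true true (W ω))
            * ((Y₁ ω - Y₀ ω) - mstar1 (W ω))
        else 0)
      - (if A ω = false ∧ S ω = true then
          gprop μ W A S astar false (W ω)
            / ((μ (evtAS A S astar false)).toReal * gprop μ W A S false true (W ω))
            * ((Y₁ ω - Y₀ ω) - mstar0 (W ω))
        else 0)
      + (if A ω = astar ∧ S ω = false then
          (1 / (μ (evtAS A S astar false)).toReal) * (mstar1 (W ω) - mstar0 (W ω))
        else 0)) ∂μ
    = psiParam μ W A S Y₀ Y₁ astar :=
  dr_functional_correct_propensity_models_general μ S A W Y₀ Y₁ hS hA hW hY₀ hY₁ astar hpos mstar1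
    mstar0

end
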